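/- arXiv:2210.05535 — 4 statements merged into one kernel-verified Lean document; each statement's English description precedes it below -/
import Mathlib

section
/- Two quaternions q1 and q2 are similar (i.e., there exists a unit quaternion s with s* q2 s = q1) if and only if Re(q1) = Re(q2) and |Im(q1)| = |Im(q2)|. -/
open Quaternion

/-- Two quaternions are similar if they are conjugate by a unit quaternion. -/
def QSimilar (q1 q2 : ℍ[ℝ]) : Prop := ∃ s : ℍ[ℝ], ‖s‖ = 1 ∧ star s * q2 * s = q1

private lemma sq_of_re_zero {q : ℍ[ℝ]} (h : q.re = 0) :
    q * q = -((normSq q : ℝ) : ℍ[ℝ]) := by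
  have hs : star q = -q := Quaternion.star_eq_neg.mpr h
  have := Quaternion.star_mul_self q
  rw [hs, neg_mul] at this
  exact neg_eq_iff_eq_neg.mp this

private lemma conj_unit {a b t : ℍ[ℝ]} (ht : t ≠ 0) (hcomm : b * t = t * a) :
    ∃ s : ℍ[ℝ], ‖s‖ = 1 ∧ star s * b * s = a := by
  have hn : ‖t‖ ≠ 0 := norm_ne_zero_iff.mpr ht
  refine ⟨‖t‖⁻¹ • t, ?_, ?_⟩
  · rw [norm_smul, norm_inv, norm_norm, inv_mul_cancel₀ hn]
  · have key : star t * b * t = ((normSq t : ℝ) : ℍ[ℝ]) * a := by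
      rw [mul_assoc, hcomm, ← mul_assoc, Quaternion.star_mul_self]
    have h1 : star (‖t‖⁻¹ • t) * b * (‖t‖⁻¹ • t)
        = (‖t‖⁻¹ * ‖t‖⁻¹) • (star t * b * t) := by
      rw [Quaternion.star_smul, smul_mul_assoc, smul_mul_assoc,
        mul_smul_comm, smul_smul]
    rw [h1, key, Quaternion.coe_mul_eq_smul, smul_smul,
      Quaternion.normSq_eq_norm_mul_self]
    have : ‖t‖⁻¹ * ‖t‖⁻¹ * (‖t‖ * ‖t‖) = 1 := by field_simp
    rw [this, one_smul]

/-- Two quaternions are similar iff they have the same real part and the same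
norm of the imaginary part. -/
theorem qsimilar_iff_re_eq_and_norm_im_eq (q1 q2 : ℍ[ℝ]) :
    QSimilar q1 q2 ↔ q1.re = q2.re ∧ ‖q1.im‖ = ‖q2.im‖ := by
  have normSq_im : ∀ q : ℍ[ℝ], normSq q.im = normSq q - q.re ^ 2 := by
    intro q
    simp [Quaternion.normSq_def']
    ring
  constructor
  · rintro ⟨s, hs, rfl⟩
    have hss : s * star s = 1 := by
      have h := Quaternion.self_mul_star s
      rw [Quaternion.normSq_eq_norm_mul_self, hs] at h
      simpa using h
    have hre : (star s * q2 * s).re = q2.re := by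
      have h2 : (star s * q2 * s).re = (s * (star s * q2)).re := by
        simp [Quaternion.re_mul]; ring
      rw [h2, ← mul_assoc, hss, one_mul]
    refine ⟨hre, ?_⟩
    have hnorm : ‖star s * q2 * s‖ = ‖q2‖ := by
      rw [norm_mul, norm_mul, Quaternion.norm_star, hs]; ring
    have h3 : normSq (star s * q2 * s).im = normSq q2.im := by
      rw [normSq_im, normSq_im, hre, Quaternion.normSq_eq_norm_mul_self,
        Quaternion.normSq_eq_norm_mul_self, hnorm]
    have h4 : ‖(star s * q2 * s).im‖ * ‖(star s * q2 * s).im‖ = ‖q2.im‖ * ‖q2.im‖ := by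
      rw [← Quaternion.normSq_eq_norm_mul_self, ← Quaternion.normSq_eq_norm_mul_self, h3]
    nlinarith [norm_nonneg (star s * q2 * s).im, norm_nonneg q2.im]
  · rintro ⟨hre, him⟩
    set a := q1.im with ha_def
    set b := q2.im with hb_def
    have ha : a.re = 0 := Quaternion.re_im q1
    have hb : b.re = 0 := Quaternion.re_im q2
    have hnsq : normSq a = normSq b := by
      rw [Quaternion.normSq_eq_norm_mul_self, Quaternion.normSq_eq_norm_mul_self, him]
    suffices h : ∃ s : ℍ[ℝ], ‖s‖ = 1 ∧ star s * b * s = a by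
      obtain ⟨s, hs, hconj⟩ := h
      refine ⟨s, hs, ?_⟩
      have hss : star s * s = 1 := by
        have h := Quaternion.star_mul_self s
        rw [Quaternion.normSq_eq_norm_mul_self, hs] at h
        simpa using h
      calc star s * q2 * s = star s * ((q2.re : ℍ[ℝ]) + b) * s := by rw [Quaternion.re_add_im]
        _ = (q2.re : ℍ[ℝ]) * (star s * s) + star s * b * s := by
            rw [mul_add, add_mul,
              show star s * (q2.re : ℍ[ℝ]) = (q2.re : ℍ[ℝ]) * star s from
                (Quaternion.coe_commutes _ _).symm, mul_assoc]
        _ = (q1.re : ℍ[ℝ]) + a := by rw [hss, mul_one, hconj, hre]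
        _ = q1 := Quaternion.re_add_im q1
    by_cases h0 : a + b = 0
    · have ha' : a = -b := eq_neg_of_add_eq_zero_left h0
      by_cases hb0 : b = 0
      · exact ⟨1, by simp, by simp [hb0, ha', star_one]⟩
      · by_cases hxy : b.imI = 0 ∧ b.imJ = 0
        · refine conj_unit (t := (⟨0, 1, 0, 0⟩ : ℍ[ℝ])) ?_ ?_
          · intro h
            have := congrArg QuaternionAlgebra.imI h
            simp at this
          · ext
            · erw [Quaternion.re_mul, Quaternion.re_mul]
              simp [ha', hb, hxy.1, hxy.2]
            · erw [Quaternion.imI_mul, Quaternion.imI_mul]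
              simp [ha', hb, hxy.1, hxy.2]
            · erw [Quaternion.imJ_mul, Quaternion.imJ_mul]
              simp [ha', hb, hxy.1, hxy.2]
            · erw [Quaternion.imK_mul, Quaternion.imK_mul]
              simp [ha', hb, hxy.1, hxy.2]
        · refine conj_unit (t := (⟨0, -b.imJ, b.imI, 0⟩ : ℍ[ℝ])) ?_ ?_
          · intro h
            rw [not_and_or] at hxy
            have h1 := congrArg QuaternionAlgebra.imI h
            have h2 := congrArg QuaternionAlgebra.imJ h
            simp at h1 h2
            tauto
          · ext
            · erw [Quaternion.re_mul, Quaternion.re_mul]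
              simp [ha', hb]; ring
            · erw [Quaternion.imI_mul, Quaternion.imI_mul]
              simp [ha', hb]; ring
            · erw [Quaternion.imJ_mul, Quaternion.imJ_mul]
              simp [ha', hb]; ring
            · erw [Quaternion.imK_mul, Quaternion.imK_mul]
              simp [ha', hb]; ring
    · refine conj_unit h0 ?_
      have hb2 : b * b = a * a := by
        rw [sq_of_re_zero hb, sq_of_re_zero ha, hnsq]
      rw [mul_add, add_mul, hb2]
      exact add_comm _ _
end

section
/- For every quaternion q, the similarity class [q] = {s* q s : |s| = 1} intersects the complex numbers (the span of 1 and i) in exactly the set {Re(q) + |Im(q)| i, Re(q) - |Im(q)| i}; in particular every quaternion is similar to a complex number with nonnegative imaginary part. -/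
open Quaternion

/-- The similarity class of a quaternion. -/
def simClass (q : ℍ[ℝ]) : Set ℍ[ℝ] := {p | ∃ s : ℍ[ℝ], ‖s‖ = 1 ∧ p = star s * q * s}

private def jq : ℍ[ℝ] := ⟨0, 0, 1, 0⟩

private lemma normSq_of_norm_one {s : ℍ[ℝ]} (hs : ‖s‖ = 1) : normSq s = 1 := by
  rw [normSq_eq_norm_mul_self, hs, mul_one]

private lemma norm_one_of_normSq {s : ℍ[ℝ]} (hs : normSq s = 1) : ‖s‖ = 1 := by
  have h' := normSq_eq_norm_mul_self s
  nlinarith [norm_nonneg s]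

private lemma jq_norm : ‖jq‖ = 1 := by
  apply norm_one_of_normSq
  rw [normSq_def']
  show (0:ℝ)^2 + 0^2 + 1^2 + 0^2 = 1
  norm_num

private lemma re_conj {s : ℍ[ℝ]} (hs : ‖s‖ = 1) (q : ℍ[ℝ]) :
    (star s * q * s).re = q.re := by
  have h1 : star s * q * s + star (star s * q * s) = star s * (q + star q) * s := by
    simp only [star_mul, star_star, mul_add, add_mul]
    noncomm_ring
  rw [Quaternion.self_add_star', Quaternion.self_add_star'] at h1
  have h2 : star s * ((2 * q.re : ℝ) : ℍ[ℝ]) * s = ((2 * q.re : ℝ) : ℍ[ℝ]) * (star s * s) := by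
    rw [← Quaternion.coe_commutes, mul_assoc]
  rw [h2, star_mul_self, normSq_of_norm_one hs] at h1
  have h3 := congrArg QuaternionAlgebra.re h1
  simp only [← Quaternion.coe_mul, mul_one, Quaternion.re_coe] at h3
  linarith

private lemma conj_mem {q p t : ℍ[ℝ]} (hp : p ∈ simClass q) (ht : ‖t‖ = 1) :
    star t * p * t ∈ simClass q := by
  obtain ⟨s, hs, rfl⟩ := hp
  refine ⟨s * t, by rw [norm_mul, hs, ht, mul_one], ?_⟩
  rw [star_mul]
  noncomm_ring

set_option maxHeartbeats 1000000 in
/-- The similarity class of `q` meets the complex plane (span of `1` and `i`)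
in exactly `{Re q + |Im q| i, Re q - |Im q| i}`; in particular every quaternion
is similar to a complex number with nonnegative imaginary part. -/
theorem simClass_inter_complex (q : ℍ[ℝ]) :
    simClass q ∩ {p : ℍ[ℝ] | p.imJ = 0 ∧ p.imK = 0}
      = {(⟨q.re, ‖q.im‖, 0, 0⟩ : ℍ[ℝ]), (⟨q.re, -‖q.im‖, 0, 0⟩ : ℍ[ℝ])} ∧
    ((⟨q.re, ‖q.im‖, 0, 0⟩ : ℍ[ℝ]) ∈ simClass q ∧ 0 ≤ ‖q.im‖) := by
  have hq : q = (⟨q.re, q.imI, q.imJ, q.imK⟩ : ℍ[ℝ]) := rfl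
  have hr2 : ‖q.im‖ ^ 2 = q.imI ^ 2 + q.imJ ^ 2 + q.imK ^ 2 := by
    rw [sq, ← normSq_eq_norm_mul_self, normSq_def']
    simp
  have hr0 : 0 ≤ ‖q.im‖ := norm_nonneg _
  -- membership of t₊
  have hplus : (⟨q.re, ‖q.im‖, 0, 0⟩ : ℍ[ℝ]) ∈ simClass q := by
    by_cases hra : ‖q.im‖ + q.imI = 0
    · have hb : q.imJ = 0 := by
        have hb2 : q.imJ ^ 2 = 0 := by nlinarith [sq_nonneg q.imJ, sq_nonneg q.imK]
        exact (pow_eq_zero_iff two_ne_zero).mp hb2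
      have hc : q.imK = 0 := by
        have hc2 : q.imK ^ 2 = 0 := by nlinarith [sq_nonneg q.imJ, sq_nonneg q.imK]
        exact (pow_eq_zero_iff two_ne_zero).mp hc2
      have ha : q.imI = -‖q.im‖ := by linarith
      refine ⟨jq, jq_norm, ?_⟩
      ext <;>
        simp [ha, hb, hc, Quaternion.re_mul, Quaternion.imI_mul, Quaternion.imJ_mul,
          Quaternion.imK_mul, Quaternion.re_star, Quaternion.imI_star, Quaternion.imJ_star,
          Quaternion.imK_star] <;>
        simp [jq, ha, hb, hc]
    · have haabs : |q.imI| ≤ ‖q.im‖ := by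
        rw [← Real.sqrt_sq_eq_abs, ← Real.sqrt_sq hr0]
        exact Real.sqrt_le_sqrt (by nlinarith [sq_nonneg q.imJ, sq_nonneg q.imK])
      have hra' : 0 < ‖q.im‖ + q.imI :=
        lt_of_le_of_ne (by linarith [neg_abs_le q.imI]) (Ne.symm hra)
      have hrpos : 0 < ‖q.im‖ := by nlinarith [neg_abs_le q.imI, abs_nonneg q.imI]
      set s₀ : ℍ[ℝ] := ⟨0, q.imI + ‖q.im‖, q.imJ, q.imK⟩ with hs₀
      have hns₀ : normSq s₀ = 2 * ‖q.im‖ * (‖q.im‖ + q.imI) := by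
        rw [normSq_def']
        show (0:ℝ) ^ 2 + (q.imI + ‖q.im‖) ^ 2 + q.imJ ^ 2 + q.imK ^ 2
            = 2 * ‖q.im‖ * (‖q.im‖ + q.imI)
        nlinarith [hr2]
      have hsqnorm : ‖s₀‖ * ‖s₀‖ = 2 * ‖q.im‖ * (‖q.im‖ + q.imI) := by
        rw [← normSq_eq_norm_mul_self, hns₀]
      have hn₀pos : 0 < ‖s₀‖ := by
        nlinarith [norm_nonneg s₀, mul_pos (mul_pos two_pos hrpos) hra']
      have hkey : star s₀ * q * s₀
          = (2 * ‖q.im‖ * (‖q.im‖ + q.imI)) • (⟨q.re, ‖q.im‖, 0, 0⟩ : ℍ[ℝ]) := by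
        ext <;>
          simp only [Quaternion.re_mul, Quaternion.imI_mul, Quaternion.imJ_mul,
            Quaternion.imK_mul, Quaternion.re_star, Quaternion.imI_star, Quaternion.imJ_star,
            Quaternion.imK_star, Quaternion.re_smul, Quaternion.imI_smul, Quaternion.imJ_smul,
            Quaternion.imK_smul, QuaternionAlgebra.smul_mk, smul_eq_mul] <;>
          simp only [hs₀]
        · linear_combination (-q.re) * hr2
        · linear_combination (-(q.imI + 2 * ‖q.im‖)) * hr2
        · linear_combination (-q.imJ) * hr2
        · linear_combination (-q.imK) * hr2
      refine ⟨‖s₀‖⁻¹ • s₀, ?_, ?_⟩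
      · rw [norm_smul, norm_inv, norm_norm, inv_mul_cancel₀ hn₀pos.ne']
      · rw [Quaternion.star_smul, smul_mul_assoc, mul_smul_comm, smul_mul_assoc, smul_smul,
          hkey]
        erw [smul_smul]
        have h1 : ‖s₀‖⁻¹ * ‖s₀‖⁻¹ * (2 * ‖q.im‖ * (‖q.im‖ + q.imI)) = 1 := by
          rw [← hsqnorm]
          field_simp
        rw [h1]
        erw [one_smul]
  have hminus : (⟨q.re, -‖q.im‖, 0, 0⟩ : ℍ[ℝ]) ∈ simClass q := by
    have hmem := conj_mem hplus jq_norm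
    set t : ℍ[ℝ] := ⟨q.re, ‖q.im‖, 0, 0⟩ with ht
    refine Set.mem_of_eq_of_mem ?_ hmem
    ext <;>
      simp [Quaternion.re_mul, Quaternion.imI_mul, Quaternion.imJ_mul,
        Quaternion.imK_mul, Quaternion.re_star, Quaternion.imI_star, Quaternion.imJ_star,
        Quaternion.imK_star] <;>
      simp [jq, ht]
  refine ⟨?_, hplus, hr0⟩
  ext p
  simp only [Set.mem_inter_iff, Set.mem_setOf_eq, Set.mem_insert_iff, Set.mem_singleton_iff]
  constructor
  · rintro ⟨⟨s, hs, rfl⟩, hJ, hK⟩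
    set p := star s * q * s with hp
    have hre : p.re = q.re := re_conj hs q
    have hns : normSq p = normSq q := by
      rw [hp, map_mul, map_mul, normSq_star, normSq_of_norm_one hs]
      ring
    have hI2 : p.imI ^ 2 = ‖q.im‖ ^ 2 := by
      rw [normSq_def', normSq_def'] at hns
      rw [hJ, hK, hre] at hns
      linarith [hns, hr2]
    rcases sq_eq_sq_iff_eq_or_eq_neg.mp hI2 with h | h
    · left; ext <;> simp [hre, h, hJ, hK]
    · right; ext <;> simp [hre, h, hJ, hK]
  · rintro (rfl | rfl)
    · exact ⟨hplus, rfl, rfl⟩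
    · exact ⟨hminus, rfl, rfl⟩
end

section
/- For the quaternionic backward shift T on ℓ²(ℕ, H) (T e_1 = 0, T e_n = e_{n−1}), the quaternionic numerical range W(T) equals the open unit ball of H. -/
/-!
For `‖q‖ < 1` the geometric sequence `xₙ = √(1 - ‖q‖²) qⁿ` is a unit right eigenvector of the
backward shift, `x (n + 1) = x n * q`, so `⟨Tx, x⟩ = ⟨x, x⟩ q = q`. Conversely, for a unit vector
`x` the triangle inequality gives `‖⟨Tx, x⟩‖ ≤ ∑ aₙ aₙ₊₁` with `aₙ = ‖xₙ‖`, and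
`2 aₙ aₙ₊₁ ≤ aₙ² + aₙ₊₁²` sums to `∑ aₙ aₙ₊₁ ≤ ∑ aₙ² = 1`; equality in every term would make `a`
constant, hence zero since it is square-summable.
-/

open Quaternion

section ShiftProduct

variable {a : ℕ → ℝ}

theorem summable_mul_succ_of_summable_sq (ha : Summable fun n => a n ^ 2) :
    Summable fun n => a n * a (n + 1) := by
  refine .of_norm_bounded ((ha.add ((summable_nat_add_iff 1).2 ha)).div_const 2) fun n => ?_
  rw [Real.norm_eq_abs, abs_mul]
  nlinarith [two_mul_le_add_sq |a n| |a (n + 1)|, sq_abs (a n), sq_abs (a (n + 1))]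

theorem eq_zero_of_summable_sq_of_succ_eq (ha : Summable fun n => a n ^ 2)
    (hconst : ∀ n, a (n + 1) = a n) : a = 0 := by
  have hconst' : ∀ n, a n = a 0 := fun n => by
    induction n with
    | zero => rfl
    | succ n ih => rw [hconst, ih]
  have hlim := ha.tendsto_atTop_zero
  simp only [hconst'] at hlim
  have ha0 : a 0 ^ 2 = 0 := tendsto_const_nhds_iff.1 hlim
  funext n
  rw [hconst', pow_eq_zero_iff two_ne_zero |>.1 ha0, Pi.zero_apply]

theorem tsum_mul_succ_lt_tsum_sq (ha : Summable fun n => a n ^ 2) (hne : a ≠ 0) :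
    ∑' n, a n * a (n + 1) < ∑' n, a n ^ 2 := by
  have ha' : Summable fun n => a (n + 1) ^ 2 := (summable_nat_add_iff 1).2 ha
  obtain ⟨k, hk⟩ : ∃ k, a (k + 1) ≠ a k := by
    by_contra! h
    exact hne (eq_zero_of_summable_sq_of_succ_eq ha h)
  have hk' : 0 < (a k - a (k + 1)) ^ 2 := sq_pos_of_ne_zero (sub_ne_zero.2 hk.symm)
  calc ∑' n, a n * a (n + 1) < ∑' n, (a n ^ 2 + a (n + 1) ^ 2) / 2 := by
        refine Summable.tsum_lt_tsum (i := k) (fun n => ?_) (by linarith)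
          (summable_mul_succ_of_summable_sq ha) ((ha.add ha').div_const 2)
        nlinarith [sq_nonneg (a n - a (n + 1))]
    _ = (∑' n, a n ^ 2 + ∑' n, a (n + 1) ^ 2) / 2 := by rw [tsum_div_const, ha.tsum_add ha']
    _ ≤ ∑' n, a n ^ 2 := by
        rw [ha.tsum_eq_zero_add]
        linarith [sq_nonneg (a 0)]

end ShiftProduct

theorem tsum_mul_succ_of_succ_eq_mul {R : Type*} [DivisionSemiring R] [TopologicalSpace R]
    [IsTopologicalSemiring R] [T2Space R] (y x : ℕ → R) (s : R)
    (hx : ∀ n, x (n + 1) = x n * s) :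
    ∑' n, y n * x (n + 1) = (∑' n, y n * x n) * s := by
  simp only [hx, ← mul_assoc, tsum_mul_right]

namespace Quaternion

theorem star_mul_self_eq_coe_sq_norm (q : ℍ[ℝ]) : star q * q = ((‖q‖ ^ 2 : ℝ) : ℍ[ℝ]) := by
  rw [star_mul_self, normSq_eq_norm_mul_self, sq]

theorem tsum_star_mul_self {ι : Type*} (x : ι → ℍ[ℝ]) :
    ∑' n, star (x n) * x n = ((∑' n, ‖x n‖ ^ 2 : ℝ) : ℍ[ℝ]) := by
  simp only [star_mul_self_eq_coe_sq_norm, tsum_coe]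

theorem norm_tsum_star_mul_succ_lt_one {x : ℕ → ℍ[ℝ]} (hx : Summable fun n => ‖x n‖ ^ 2)
    (h1 : ∑' n, star (x n) * x n = 1) : ‖∑' n, star (x n) * x (n + 1)‖ < 1 := by
  have hnorm : ∑' n, ‖x n‖ ^ 2 = 1 := by
    rw [tsum_star_mul_self] at h1
    exact coe_injective (h1.trans coe_one.symm)
  have hne : (fun n => ‖x n‖) ≠ 0 := fun h0 => by
    simp only [funext_iff, Pi.zero_apply] at h0
    simp [h0] at hnorm
  calc ‖∑' n, star (x n) * x (n + 1)‖ ≤ ∑' n, ‖star (x n) * x (n + 1)‖ :=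
        norm_tsum_le_tsum_norm (by simpa using summable_mul_succ_of_summable_sq hx)
    _ = ∑' n, ‖x n‖ * ‖x (n + 1)‖ := by simp only [norm_mul, norm_star]
    _ < ∑' n, ‖x n‖ ^ 2 := tsum_mul_succ_lt_tsum_sq hx hne
    _ = 1 := hnorm

theorem hasSum_sq_norm_mul_pow {q : ℍ[ℝ]} (hq : ‖q‖ < 1) :
    HasSum (fun n => ‖((√(1 - ‖q‖ ^ 2) : ℝ) : ℍ[ℝ]) * q ^ n‖ ^ 2) 1 := by
  have hr0 : 0 ≤ ‖q‖ ^ 2 := sq_nonneg _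
  have hr1 : ‖q‖ ^ 2 < 1 := by nlinarith [norm_nonneg q]
  have hterm : ∀ n, ‖((√(1 - ‖q‖ ^ 2) : ℝ) : ℍ[ℝ]) * q ^ n‖ ^ 2 = (1 - ‖q‖ ^ 2) * (‖q‖ ^ 2) ^ n :=
    fun n => by
      rw [norm_mul, norm_pow, norm_coe, Real.norm_eq_abs, mul_pow, sq_abs,
        Real.sq_sqrt (by linarith), ← pow_mul, ← pow_mul, mul_comm n]
  simp only [hterm]
  have hgeom := (hasSum_geometric_of_lt_one hr0 hr1).mul_left (1 - ‖q‖ ^ 2)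
  rwa [mul_inv_cancel₀ (sub_ne_zero.2 hr1.ne')] at hgeom

end Quaternion

/-- The quaternionic numerical range of the backward shift on `ℓ²(ℕ, ℍ)`
(with inner product `⟨x,y⟩ = ∑ yₙ* xₙ` and `(Tx)ₙ = x_{n+1}`) equals the open
unit ball of the quaternions. -/
theorem numRange_backward_shift :
    {q : ℍ[ℝ] | ∃ x : ℕ → ℍ[ℝ], Summable (fun n => ‖x n‖ ^ 2) ∧
        (∑' n, star (x n) * x n) = 1 ∧ (∑' n, star (x n) * x (n + 1)) = q}
      = Metric.ball (0 : ℍ[ℝ]) 1 := by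
  ext q
  simp only [Set.mem_ofPred_eq, Metric.mem_ball, dist_zero_right]
  constructor
  · rintro ⟨x, hx, h1, rfl⟩
    exact norm_tsum_star_mul_succ_lt_one hx h1
  · intro hq
    set x : ℕ → ℍ[ℝ] := fun n => ((√(1 - ‖q‖ ^ 2) : ℝ) : ℍ[ℝ]) * q ^ n
    have hsq := hasSum_sq_norm_mul_pow hq
    have h1 : ∑' n, star (x n) * x n = 1 := by
      rw [tsum_star_mul_self, hsq.tsum_eq, coe_one]
    have heigen : ∀ n, x (n + 1) = x n * q := fun n => by
      simp only [x, pow_succ, mul_assoc]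
    refine ⟨x, hsq.summable, h1, ?_⟩
    rw [tsum_mul_succ_of_succ_eq_mul _ x q heigen, h1, one_mul]
end

section
/- Let D be the diagonal operator on the quaternionic Hilbert space ℓ²(ℕ, H) given by D e_n = e_n d_n with d_n ∈ C⁺ (complex, nonnegative imaginary part) and sup_n |d_n| < ∞. For distinct indices k, j with Im(d_k) + Im(d_j) > 0, the segment [d_k, d_j*] meets the real axis in the single point c_{kj} = h_k s_j/(s_j + s_k) + h_j s_k/(s_j + s_k), where d_n = h_n + s_n i, and this point belongs to the quaternionic numerical range W(D). -/
open Quaternion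

/-- The complex quaternion `h + s i`. -/
def quatC (h s : ℝ) : ℍ[ℝ] := ⟨h, s, 0, 0⟩

/-- For the bounded diagonal operator `D eₙ = eₙ dₙ` on `ℓ²(ℕ, ℍ)` with
`dₙ = hₙ + sₙ i ∈ ℂ⁺`, and distinct indices `k ≠ j` with `s k + s j > 0`,
the segment `[d k, (d j)*]` meets the real axis exactly in the single point
`c = (h k * s j + h j * s k)/(s j + s k)`, and this point belongs to the
quaternionic numerical range `W(D) = {⟨Dx,x⟩ : ‖x‖ = 1}`. -/
theorem segment_meets_real_and_mem_numRange (h s : ℕ → ℝ) (hs : ∀ n, 0 ≤ s n)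
    (hbdd : ∃ C : ℝ, ∀ n, ‖quatC (h n) (s n)‖ ≤ C)
    (k j : ℕ) (hkj : k ≠ j) (hpos : 0 < s k + s j) :
    segment ℝ (quatC (h k) (s k)) (star (quatC (h j) (s j)))
        ∩ {q : ℍ[ℝ] | ∃ r : ℝ, q = (r : ℍ[ℝ])}
      = {(((h k * s j + h j * s k) / (s j + s k) : ℝ) : ℍ[ℝ])} ∧
    (((h k * s j + h j * s k) / (s j + s k) : ℝ) : ℍ[ℝ]) ∈
      {q : ℍ[ℝ] | ∃ x : ℕ → ℍ[ℝ], Summable (fun n => ‖x n‖ ^ 2) ∧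
        (∑' n, star (x n) * x n) = 1 ∧
        (∑' n, star (x n) * (quatC (h n) (s n) * x n)) = q} := by
  have hsk := hs k
  have hsj := hs j
  have hT : (0:ℝ) < s j + s k := by linarith
  set c : ℝ := (h k * s j + h j * s k) / (s j + s k) with hc
  set u : ℝ := s j / (s j + s k) with hu
  set v : ℝ := s k / (s j + s k) with hv
  have hu0 : 0 ≤ u := div_nonneg hsj hT.le
  have hv0 : 0 ≤ v := div_nonneg hsk hT.le
  have huv : u + v = 1 := by rw [hu, hv]; field_simp
  have hcuv : u * h k + v * h j = c := by rw [hu, hv, hc]; field_simp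
  have hsuv : u * s k - v * s j = 0 := by rw [hu, hv]; field_simp; ring
  constructor
  · ext q
    simp only [Set.mem_inter_iff, Set.mem_setOf_eq, Set.mem_singleton_iff]
    constructor
    · rintro ⟨⟨a, b, ha, hb, hab, heq⟩, r, hr⟩
      subst hr
      rw [Quaternion.ext_iff] at heq
      simp [Quaternion.re_smul] at heq; simp [quatC] at heq
      obtain ⟨hre, himI⟩ := heq
      have haval : a = u := by rw [hu]; field_simp; nlinarith
      have hbval : b = v := by rw [hv]; field_simp; nlinarith
      have : r = c := by rw [← hre, haval, hbval]; linarith [hcuv]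
      rw [this]
    · rintro rfl
      refine ⟨⟨u, v, hu0, hv0, huv, ?_⟩, ⟨_, rfl⟩⟩
      rw [Quaternion.ext_iff]
      simp [Quaternion.re_smul]; simp [quatC]
      refine ⟨hcuv, by linarith [hsuv]⟩
  · set x : ℕ → ℍ[ℝ] := fun n =>
      if n = k then ((Real.sqrt u : ℝ) : ℍ[ℝ]) else
      if n = j then (⟨0, 0, Real.sqrt v, 0⟩ : ℍ[ℝ]) else 0 with hx
    have hxk : x k = ((Real.sqrt u : ℝ) : ℍ[ℝ]) := by simp [hx]
    have hxj : x j = (⟨0, 0, Real.sqrt v, 0⟩ : ℍ[ℝ]) := by simp [hx, hkj.symm]; rfl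
    have hx0 : ∀ n, n ∉ ({k, j} : Finset ℕ) → x n = 0 := by
      intro n hn
      simp only [Finset.mem_insert, Finset.mem_singleton, not_or] at hn
      simp [hx, hn.1, hn.2]
    have hsu : Real.sqrt u * Real.sqrt u = u := Real.mul_self_sqrt hu0
    have hsv : Real.sqrt v * Real.sqrt v = v := Real.mul_self_sqrt hv0
    refine ⟨x, ?_, ?_, ?_⟩
    · exact summable_of_ne_finset_zero (s := {k, j}) (fun n hn => by rw [hx0 n hn]; simp)
    · rw [tsum_eq_sum (s := {k, j}) (fun n hn => by rw [hx0 n hn]; simp),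
        Finset.sum_pair hkj, hxk]
      rw [Quaternion.ext_iff]
      simp [Quaternion.re_mul, Quaternion.imI_mul, Quaternion.imJ_mul, Quaternion.imK_mul]; simp [hxj, hsu, hsv, huv]
    · rw [tsum_eq_sum (s := {k, j}) (fun n hn => by rw [hx0 n hn]; simp),
        Finset.sum_pair hkj, hxk]
      rw [Quaternion.ext_iff]
      simp [Quaternion.re_mul, Quaternion.imI_mul, Quaternion.imJ_mul, Quaternion.imK_mul]; simp [quatC, hxj, hsu, hsv]
      constructor
      · linear_combination h k * hsu + h j * hsv + hcuv
      · linear_combination s k * hsu - s j * hsv + hsuv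
end
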